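/- arXiv:2301.03676 — 2 statements merged into one kernel-verified Lean document; each statement's English description precedes it below -/
import Mathlib

section
/- Let G be the iterated pushout identifying the meridians of G_{3,5}, G_{−2,7}, and G_{−2,7} to a common element m (the group of the connected sum T_{3,5} # T_{−2,7} # T_{−2,7}), and let λ_X, λ⁽¹⁾, λ⁽²⁾ denote the images in G of the three longitudes. Then π₁(Σ₂) is isomorphic to the quotient of G by the normal closure of the single element m λ_X λ⁽¹⁾ λ⁽²⁾ (the fundamental group of +1 Dehn surgery on T_{3,5} # T_{−2,7} # T_{−2,7}). -/
/-! A pushout along `ℤ²` is the pushout along the first factor `ℤ` followed by the single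
relation identifying the images of the second generator. For `ψ_X`, `ψ_Z` this relation reads
`λ_X = (μ_Z λ_Z)⁻¹`; since `μ_X = μ_Z` and `μ_X` commutes with `λ_X`, it is the surgery
relation `m λ_X λ⁽¹⁾ λ⁽²⁾ = 1`. -/

open Matrix

noncomputable section

/-- `SU(2)`: 2×2 special unitary complex matrices. -/
abbrev SU2 : Type := Matrix.specialUnitaryGroup (Fin 2) ℂ

namespace CS

noncomputable instance : Group SU2 :=
  { (inferInstance : Monoid SU2) with
    inv := fun A => ⟨star (A : Matrix (Fin 2) (Fin 2) ℂ), by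
      rcases Submonoid.mem_inf.mp A.2 with ⟨h1, h2⟩
      refine Submonoid.mem_inf.mpr ⟨Unitary.star_mem h1, ?_⟩
      have hdet : (star (A : Matrix (Fin 2) (Fin 2) ℂ)).det = star ((A : Matrix (Fin 2) (Fin 2) ℂ).det) := by
        simp [Matrix.star_eq_conjTranspose, Matrix.det_conjTranspose]
      have h2' : (A : Matrix (Fin 2) (Fin 2) ℂ).det = 1 := h2
      have : (star (A : Matrix (Fin 2) (Fin 2) ℂ)).det = 1 := by rw [hdet, h2', star_one]
      simpa only [MonoidHom.mem_mker, ← Matrix.coe_detMonoidHom] using this⟩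
    inv_mul_cancel := fun A => Subtype.ext (Submonoid.mem_inf.mp A.2).1.1 }

/-- The topology of pointwise convergence on the space of representations. -/
instance repTop (G : Type*) [Group G] : TopologicalSpace (G →* SU2) :=
  TopologicalSpace.induced (fun ρ => (ρ : G → SU2)) inferInstance

/-- Conjugation equivalence of representations. -/
def conjSetoid (G : Type*) [Group G] : Setoid (G →* SU2) where
  r ρ σ := ∃ u : SU2, ∀ g, σ g = u * ρ g * u⁻¹
  iseqv := by
    refine ⟨fun ρ => ⟨1, by simp⟩, ?_, ?_⟩
    · rintro ρ σ ⟨u, h⟩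
      exact ⟨u⁻¹, fun g => by rw [h g]; group⟩
    · rintro ρ σ τ ⟨u, h⟩ ⟨v, h'⟩
      exact ⟨v * u, fun g => by rw [h' g, h g]; group⟩

/-- The `SU(2)` character variety of a group `G`. -/
abbrev CharVar (G : Type*) [Group G] : Type _ := Quotient (conjSetoid G)

/-- The conjugacy class of a representation. -/
abbrev charCl {G : Type*} [Group G] (ρ : G →* SU2) : CharVar G :=
  Quotient.mk (conjSetoid G) ρ

/-- A representation is abelian if its image is abelian. -/
def IsAbelianRep {G : Type*} [Group G] (ρ : G →* SU2) : Prop :=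
  ∀ g h : G, Commute (ρ g) (ρ h)

/-- A representation is irreducible if its image is a non-abelian subgroup of `SU(2)`. -/
def IsIrrep {G : Type*} [Group G] (ρ : G →* SU2) : Prop :=
  ¬ IsAbelianRep ρ

/-- The irreducible part `χ*(G)` of the character variety. -/
abbrev CharVarIrr (G : Type*) [Group G] : Type _ :=
  {c : CharVar G // ∃ ρ : G →* SU2, IsIrrep ρ ∧ c = charCl ρ}

end CS
namespace CS

/-- `su(2)`: trace-zero skew-adjoint 2×2 complex matrices, as a real vector space. -/
def su2 : Submodule ℝ (Matrix (Fin 2) (Fin 2) ℂ) where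
  carrier := {A | Aᴴ = -A ∧ A.trace = 0}
  add_mem' := by
    rintro A B ⟨hA1, hA2⟩ ⟨hB1, hB2⟩
    refine ⟨?_, ?_⟩
    · rw [Matrix.conjTranspose_add, hA1, hB1, neg_add]
    · rw [Matrix.trace_add, hA2, hB2, add_zero]
  zero_mem' := by
    constructor <;> simp
  smul_mem' := by
    rintro c A ⟨hA1, hA2⟩
    refine ⟨?_, ?_⟩
    · rw [Matrix.conjTranspose_smul, hA1, smul_neg, star_trivial]
    · rw [Matrix.trace_smul, hA2, smul_zero]

variable {G : Type*} [Group G]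

/-- The adjoint action of a representation on 2×2 matrices: `g · v = ρ(g) v ρ(g)⁻¹`. -/
def adAct (ρ : G →* SU2) (g : G) (A : Matrix (Fin 2) (Fin 2) ℂ) : Matrix (Fin 2) (Fin 2) ℂ :=
  (ρ g : Matrix (Fin 2) (Fin 2) ℂ) * A * ((ρ g⁻¹ : SU2) : Matrix (Fin 2) (Fin 2) ℂ)

lemma adAct_add (ρ : G →* SU2) (g : G) (A B : Matrix (Fin 2) (Fin 2) ℂ) :
    adAct ρ g (A + B) = adAct ρ g A + adAct ρ g B := by
  simp [adAct, Matrix.add_mul, Matrix.mul_add]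

lemma adAct_smul (ρ : G →* SU2) (g : G) (c : ℝ) (A : Matrix (Fin 2) (Fin 2) ℂ) :
    adAct ρ g (c • A) = c • adAct ρ g A := by
  simp [adAct, Matrix.smul_mul, Matrix.mul_smul]

/-- The space of 1-cocycles of `G` with coefficients in `su(2)` twisted by `ad ρ`. -/
def oneCocyclesAd (ρ : G →* SU2) : Submodule ℝ (G → Matrix (Fin 2) (Fin 2) ℂ) where
  carrier := {f | (∀ g, f g ∈ su2) ∧ ∀ g h, f (g * h) = f g + adAct ρ g (f h)}
  add_mem' := by
    rintro f f' ⟨hf1, hf2⟩ ⟨hf'1, hf'2⟩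
    refine ⟨fun g => su2.add_mem (hf1 g) (hf'1 g), fun g h => ?_⟩
    simp only [Pi.add_apply, hf2 g h, hf'2 g h, adAct_add]
    abel
  zero_mem' := by
    refine ⟨fun g => su2.zero_mem, fun g h => ?_⟩
    simp [adAct]
  smul_mem' := by
    rintro c f ⟨hf1, hf2⟩
    refine ⟨fun g => su2.smul_mem c (hf1 g), fun g h => ?_⟩
    simp only [Pi.smul_apply, hf2 g h, adAct_smul, smul_add]

/-- The space of 1-coboundaries of `G` with coefficients in `su(2)` twisted by `ad ρ`. -/
def oneCoboundariesAd (ρ : G →* SU2) : Submodule ℝ (G → Matrix (Fin 2) (Fin 2) ℂ) where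
  carrier := {f | ∃ A ∈ su2, ∀ g, f g = adAct ρ g A - A}
  add_mem' := by
    rintro f f' ⟨A, hA, hf⟩ ⟨B, hB, hf'⟩
    refine ⟨A + B, su2.add_mem hA hB, fun g => ?_⟩
    simp only [Pi.add_apply, hf g, hf' g, adAct_add]
    abel
  zero_mem' := ⟨0, su2.zero_mem, fun g => by simp [adAct]⟩
  smul_mem' := by
    rintro c f ⟨A, hA, hf⟩
    refine ⟨c • A, su2.smul_mem c hA, fun g => ?_⟩
    simp only [Pi.smul_apply, hf g, adAct_smul, smul_sub]

/-- First group cohomology `H¹(G; su(2)_{ad ρ})`, as a real vector space. -/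
def H1Ad (ρ : G →* SU2) : Type _ :=
  ↥(oneCocyclesAd ρ) ⧸ ((oneCoboundariesAd ρ).comap (oneCocyclesAd ρ).subtype)

noncomputable instance (ρ : G →* SU2) : AddCommGroup (H1Ad ρ) :=
  inferInstanceAs (AddCommGroup (↥(oneCocyclesAd ρ) ⧸ ((oneCoboundariesAd ρ).comap (oneCocyclesAd ρ).subtype)))

noncomputable instance (ρ : G →* SU2) : Module ℝ (H1Ad ρ) :=
  inferInstanceAs (Module ℝ (↥(oneCocyclesAd ρ) ⧸ ((oneCoboundariesAd ρ).comap (oneCocyclesAd ρ).subtype)))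

/-- The dimension (rank) of `H¹(G; su(2)_{ad ρ})` over `ℝ`. -/
noncomputable def h1dim (ρ : G →* SU2) : Cardinal := Module.rank ℝ (H1Ad ρ)

end CS
namespace CS

/-- The relator set of the torus knot group `⟨x, y | xᵖ = y^q⟩`. -/
def tkRel (p q : ℤ) : Set (FreeGroup (Fin 2)) :=
  {FreeGroup.of 0 ^ p * FreeGroup.of 1 ^ (-q)}

/-- The `(p,q)` torus knot group `G_{p,q} = ⟨x, y | xᵖ y^{-q}⟩`. -/
abbrev TK (p q : ℤ) : Type := PresentedGroup (tkRel p q)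

/-- The generator `x` of `G_{p,q}`. -/
def tkx (p q : ℤ) : TK p q := PresentedGroup.of 0

/-- The generator `y` of `G_{p,q}`. -/
def tky (p q : ℤ) : TK p q := PresentedGroup.of 1

/-- The meridian `μ = xᵃ yᵇ` of `G_{p,q}`. -/
def tkMu (p q a b : ℤ) : TK p q := tkx p q ^ a * tky p q ^ b

/-- The longitude `λ = xᵖ μ^{-pq}` of `G_{p,q}`. -/
def tkLam (p q a b : ℤ) : TK p q := tkx p q ^ p * tkMu p q a b ^ (-(p * q))

lemma tk_rel_holds (p q : ℤ) : tkx p q ^ p = tky p q ^ q := by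
  have hmem : FreeGroup.of (0 : Fin 2) ^ p * FreeGroup.of (1 : Fin 2) ^ (-q) ∈
      Subgroup.normalClosure (tkRel p q) :=
    Subgroup.subset_normalClosure rfl
  have h1 : PresentedGroup.mk (tkRel p q) (FreeGroup.of 0 ^ p * FreeGroup.of 1 ^ (-q)) = 1 :=
    (QuotientGroup.eq_one_iff _).mpr hmem
  have h2 : tkx p q ^ p * tky p q ^ (-q) = 1 := by
    have := h1
    rw [_root_.map_mul, map_zpow, map_zpow] at this
    exact this
  rw [_root_.zpow_neg] at h2
  exact (mul_inv_eq_one.mp h2)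

lemma tk_xp_central (p q : ℤ) (w : TK p q) : Commute (tkx p q ^ p) w := by
  have hw : w ∈ Subgroup.closure (Set.range (PresentedGroup.of : Fin 2 → TK p q)) := by
    rw [PresentedGroup.closure_range_of]; trivial
  induction hw using Subgroup.closure_induction with
  | mem z hz =>
      obtain ⟨i, rfl⟩ := hz
      fin_cases i
      · exact (Commute.refl (tkx p q)).zpow_left p
      · rw [tk_rel_holds p q]
        exact (Commute.refl (tky p q)).zpow_left q
  | one => exact Commute.one_right _
  | mul a b _ _ ha hb => exact ha.mul_right hb
  | inv a _ ha => exact ha.inv_right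

lemma tk_mu_lam_comm (p q a b : ℤ) : Commute (tkMu p q a b) (tkLam p q a b) := by
  unfold tkLam
  exact (tk_xp_central p q (tkMu p q a b)).symm.mul_right
    ((Commute.refl (tkMu p q a b)).zpow_right (-(p * q)))

end CS
namespace CS

/-- The free abelian group of rank 2, written multiplicatively. -/
abbrev Z2 : Type := Multiplicative (ℤ × ℤ)

/-- The homomorphism `ℤ² → G` sending the generators to a pair of commuting elements. -/
def zsqHom {G : Type*} [Group G] (u v : G) (huv : Commute u v) : Z2 →* G where
  toFun z := u ^ (Multiplicative.toAdd z).1 * v ^ (Multiplicative.toAdd z).2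
  map_one' := by simp
  map_mul' z w := by
    have h := (huv.zpow_zpow (Multiplicative.toAdd w).1 (Multiplicative.toAdd z).2).eq
    simp only [toAdd_mul, Prod.fst_add, Prod.snd_add, _root_.zpow_add]
    calc u ^ (Multiplicative.toAdd z).1 * u ^ (Multiplicative.toAdd w).1 *
          (v ^ (Multiplicative.toAdd z).2 * v ^ (Multiplicative.toAdd w).2)
        = u ^ (Multiplicative.toAdd z).1 *
            (u ^ (Multiplicative.toAdd w).1 * v ^ (Multiplicative.toAdd z).2) *
            v ^ (Multiplicative.toAdd w).2 := by group
      _ = u ^ (Multiplicative.toAdd z).1 *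
            (v ^ (Multiplicative.toAdd z).2 * u ^ (Multiplicative.toAdd w).1) *
            v ^ (Multiplicative.toAdd w).2 := by rw [h]
      _ = u ^ (Multiplicative.toAdd z).1 * v ^ (Multiplicative.toAdd z).2 *
            (u ^ (Multiplicative.toAdd w).1 * v ^ (Multiplicative.toAdd w).2) := by group

section Amalg

variable {A G H : Type*} [Group A] [Group G] [Group H]

/-- The normal subgroup of the free product generated by the amalgamation relations. -/
def amalgRel (φ : A →* G) (ψ : A →* H) : Subgroup (Monoid.Coprod G H) :=
  Subgroup.normalClosure (Set.range fun a => Monoid.Coprod.inl (φ a) * (Monoid.Coprod.inr (ψ a))⁻¹)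

instance amalgRel_normal (φ : A →* G) (ψ : A →* H) : (amalgRel φ ψ).Normal :=
  Subgroup.normalClosure_normal

/-- The pushout (amalgamated free product) of `φ : A → G` and `ψ : A → H`. -/
abbrev Amalg (φ : A →* G) (ψ : A →* H) : Type _ :=
  Monoid.Coprod G H ⧸ amalgRel φ ψ

/-- The canonical map `G → G *_A H`. -/
def Amalg.inl (φ : A →* G) (ψ : A →* H) : G →* Amalg φ ψ :=
  (QuotientGroup.mk' (amalgRel φ ψ)).comp Monoid.Coprod.inl

/-- The canonical map `H → G *_A H`. -/
def Amalg.inr (φ : A →* G) (ψ : A →* H) : H →* Amalg φ ψ :=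
  (QuotientGroup.mk' (amalgRel φ ψ)).comp Monoid.Coprod.inr

lemma amalg_comm (φ : A →* G) (ψ : A →* H) (a : A) :
    Amalg.inl φ ψ (φ a) = Amalg.inr φ ψ (ψ a) := by
  have hgen : Monoid.Coprod.inl (φ a) * (Monoid.Coprod.inr (ψ a))⁻¹ ∈ amalgRel φ ψ :=
    Subgroup.subset_normalClosure ⟨a, rfl⟩
  have hinv : (Monoid.Coprod.inr (ψ a) : Monoid.Coprod G H) * (Monoid.Coprod.inl (φ a))⁻¹ ∈
      amalgRel φ ψ := by
    have := (amalgRel φ ψ).inv_mem hgen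
    simpa [_root_.mul_inv_rev] using this
  have hkey : ((Monoid.Coprod.inl (φ a) : Monoid.Coprod G H))⁻¹ * Monoid.Coprod.inr (ψ a) ∈
      amalgRel φ ψ := (amalgRel_normal φ ψ).mem_comm hinv
  exact (QuotientGroup.eq (s := amalgRel φ ψ)).mpr hkey

end Amalg

/-! Specific meridians and longitudes. -/

/-- Meridian of `T(3,5)`. -/
def mu35 : TK 3 5 := tkMu 3 5 2 (-3)
/-- Longitude of `T(3,5)`. -/
def lam35 : TK 3 5 := tkLam 3 5 2 (-3)
/-- Meridian of `T(2,7)`. -/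
def mu27 : TK 2 7 := tkMu 2 7 1 (-3)
/-- Longitude of `T(2,7)`. -/
def lam27 : TK 2 7 := tkLam 2 7 1 (-3)
/-- Meridian of `T(-2,7)`. -/
def muN27 : TK (-2) 7 := tkMu (-2) 7 1 3
/-- Longitude of `T(-2,7)`. -/
def lamN27 : TK (-2) 7 := tkLam (-2) 7 1 3

/-- `φ_X : ℤ² → G_{3,5}`, `(m,n) ↦ μ_X^m λ_X^n`. -/
def phiX : Z2 →* TK 3 5 := zsqHom mu35 lam35 (tk_mu_lam_comm 3 5 2 (-3))

lemma mu_mulLam_comm {Γ : Type*} [Group Γ] {μ ℓ : Γ} (h : Commute μ ℓ) :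
    Commute μ ((μ * ℓ)⁻¹) :=
  ((Commute.refl μ).mul_right h).inv_right

/-- `φ_Y : ℤ² → G_{2,7}`, `(m,n) ↦ μ_Y^m (μ_Y λ_Y)^{-n}`. -/
def phiY : Z2 →* TK 2 7 :=
  zsqHom mu27 ((mu27 * lam27)⁻¹) (mu_mulLam_comm (tk_mu_lam_comm 2 7 1 (-3)))

/-- `π₁(Σ₁)`, the pushout of `φ_X` and `φ_Y`. -/
abbrev Pi1Sigma1 : Type _ := Amalg phiX phiY

/-- `π₁(Z)`, the group of the complement of `T(-2,7) # T(-2,7)`: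
the pushout of the two meridian inclusions `ℤ → G_{-2,7}`. -/
abbrev Pi1Z : Type _ :=
  Amalg (zpowersHom (TK (-2) 7) muN27) (zpowersHom (TK (-2) 7) muN27)

/-- The meridian of `Z`. -/
def muZ : Pi1Z := Amalg.inl _ _ muN27

/-- The longitude of `Z`: the product of the images of the two longitudes. -/
def lamZ : Pi1Z := Amalg.inl _ _ lamN27 * Amalg.inr _ _ lamN27

lemma muZ_eq_inr : muZ = Amalg.inr (zpowersHom (TK (-2) 7) muN27) (zpowersHom (TK (-2) 7) muN27) muN27 := by
  have := amalg_comm (zpowersHom (TK (-2) 7) muN27) (zpowersHom (TK (-2) 7) muN27)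
    (Multiplicative.ofAdd 1)
  simpa [muZ] using this

lemma muZ_lamZ_comm : Commute muZ lamZ := by
  have h1 : Commute muZ (Amalg.inl (zpowersHom (TK (-2) 7) muN27) (zpowersHom (TK (-2) 7) muN27) lamN27) :=
    (tk_mu_lam_comm (-2) 7 1 3).map _
  have h2 : Commute muZ (Amalg.inr (zpowersHom (TK (-2) 7) muN27) (zpowersHom (TK (-2) 7) muN27) lamN27) := by
    rw [muZ_eq_inr]
    exact (tk_mu_lam_comm (-2) 7 1 3).map _
  exact h1.mul_right h2

/-- `ψ_X : ℤ² → G_{3,5}` (same formula as `φ_X`). -/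
def psiX : Z2 →* TK 3 5 := phiX

/-- `ψ_Z : ℤ² → π₁(Z)`, `(m,n) ↦ μ_Z^m (μ_Z λ_Z)^{-n}`. -/
def psiZ : Z2 →* Pi1Z := zsqHom muZ ((muZ * lamZ)⁻¹) (mu_mulLam_comm muZ_lamZ_comm)

/-- `π₁(Σ₂)`, the pushout of `ψ_X` and `ψ_Z`. -/
abbrev Pi1Sigma2 : Type _ := Amalg psiX psiZ

end CS
namespace CS

/-- The diagonal matrix `diag(e^{it}, e^{-it})`. -/
def diagU (t : ℝ) : Matrix (Fin 2) (Fin 2) ℂ :=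
  Matrix.diagonal ![Complex.exp ((t : ℂ) * Complex.I), Complex.exp (-(t : ℂ) * Complex.I)]

lemma star_exp_I (s : ℝ) :
    star (Complex.exp ((s : ℂ) * Complex.I)) = Complex.exp (-(s : ℂ) * Complex.I) :=
  calc star (Complex.exp ((s : ℂ) * Complex.I))
      = (starRingEnd ℂ) (Complex.exp ((s : ℂ) * Complex.I)) := rfl
    _ = Complex.exp ((starRingEnd ℂ) ((s : ℂ) * Complex.I)) := (Complex.exp_conj _).symm
    _ = Complex.exp (-(s : ℂ) * Complex.I) := by
        rw [_root_.map_mul, Complex.conj_I, Complex.conj_ofReal, mul_neg, ← neg_mul]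

lemma exp_I_mul_exp_neg_I (s : ℝ) :
    Complex.exp ((s : ℂ) * Complex.I) * Complex.exp (-(s : ℂ) * Complex.I) = 1 := by
  rw [← Complex.exp_add, show (s : ℂ) * Complex.I + -(s : ℂ) * Complex.I = 0 by ring,
    Complex.exp_zero]

lemma diagU_mul (s u : ℝ) : diagU s * diagU u = diagU (s + u) := by
  unfold diagU
  rw [Matrix.diagonal_mul_diagonal, Matrix.diagonal_eq_diagonal_iff]
  intro i
  fin_cases i
  · show Complex.exp _ * Complex.exp _ = Complex.exp _
    rw [← Complex.exp_add]; congr 1; push_cast; ring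
  · show Complex.exp _ * Complex.exp _ = Complex.exp _
    rw [← Complex.exp_add]; congr 1; push_cast; ring

lemma diagU_zero : diagU 0 = 1 := by
  unfold diagU
  rw [show (![Complex.exp (((0:ℝ) : ℂ) * Complex.I), Complex.exp (-((0:ℝ) : ℂ) * Complex.I)] :
      Fin 2 → ℂ) = fun _ => 1 by funext i; fin_cases i <;> simp]
  exact Matrix.diagonal_one

lemma star_diagU (t : ℝ) : star (diagU t) = diagU (-t) := by
  unfold diagU
  rw [Matrix.star_eq_conjTranspose, Matrix.diagonal_conjTranspose,
    Matrix.diagonal_eq_diagonal_iff]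
  intro i
  fin_cases i
  · show star (Complex.exp ((t : ℂ) * Complex.I)) = Complex.exp (((-t : ℝ) : ℂ) * Complex.I)
    rw [star_exp_I t]; push_cast; ring_nf
  · show star (Complex.exp (-(t : ℂ) * Complex.I)) = Complex.exp (-((-t : ℝ) : ℂ) * Complex.I)
    rw [show -(t : ℂ) * Complex.I = ((-t : ℝ) : ℂ) * Complex.I by push_cast; ring,
      star_exp_I (-t)]

lemma diagU_mem (t : ℝ) : diagU t ∈ Matrix.specialUnitaryGroup (Fin 2) ℂ := by
  refine Submonoid.mem_inf.mpr ⟨⟨?_, ?_⟩, ?_⟩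
  · rw [star_diagU, diagU_mul, neg_add_cancel, diagU_zero]
  · rw [star_diagU, diagU_mul, add_neg_cancel, diagU_zero]
  · have : (diagU t).det = 1 := by
      unfold diagU
      rw [Matrix.det_diagonal, Fin.prod_univ_two]
      simpa using exp_I_mul_exp_neg_I t
    simpa only [MonoidHom.mem_mker, ← Matrix.coe_detMonoidHom] using this

/-- The element `diag(e^{it}, e^{-it})` of `SU(2)`. -/
def diagSU (t : ℝ) : SU2 := ⟨diagU t, diagU_mem t⟩

lemma diagSU_comm (s t : ℝ) : Commute (diagSU s) (diagSU t) := by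
  apply Subtype.ext
  show diagU s * diagU t = diagU t * diagU s
  rw [diagU_mul, diagU_mul, add_comm]

end CS
namespace CS

/-- The setoid on `A × [0,1)` collapsing `A × {0}` to a point. -/
def coneSetoid (A : Type*) : Setoid (A × (Set.Ico (0:ℝ) 1)) where
  r p q := p = q ∨ (((p.2 : ℝ) = 0) ∧ ((q.2 : ℝ) = 0))
  iseqv := by
    constructor
    · intro p; exact Or.inl rfl
    · rintro p q (rfl | ⟨h1, h2⟩)
      · exact Or.inl rfl
      · exact Or.inr ⟨h2, h1⟩
    · rintro p q r (rfl | ⟨h1, h2⟩) h'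
      · exact h'
      · rcases h' with rfl | ⟨h3, h4⟩
        · exact Or.inr ⟨h1, h2⟩
        · exact Or.inr ⟨h1, h4⟩

/-- The open cone on a space `A`: `(A × [0,1)) / (A × {0})`. -/
abbrev OpenCone (A : Type*) [TopologicalSpace A] : Type _ := Quotient (coneSetoid A)

/-- The setoid on `X ⊕ Y` identifying the two base points `x₀` and `y₀`. -/
def wedgeSetoid (X Y : Type*) (x0 : X) (y0 : Y) : Setoid (X ⊕ Y) where
  r p q := p = q ∨ ((p = Sum.inl x0 ∨ p = Sum.inr y0) ∧ (q = Sum.inl x0 ∨ q = Sum.inr y0))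
  iseqv := by
    constructor
    · intro p; exact Or.inl rfl
    · rintro p q (rfl | ⟨h1, h2⟩)
      · exact Or.inl rfl
      · exact Or.inr ⟨h2, h1⟩
    · rintro p q r (rfl | ⟨h1, h2⟩) h'
      · exact h'
      · rcases h' with rfl | ⟨h3, h4⟩
        · exact Or.inr ⟨h1, h2⟩
        · exact Or.inr ⟨h1, h4⟩

/-- The one-point union (wedge) of `X` and `Y` at the base points `x₀`, `y₀`. -/
abbrev Wedge (X Y : Type*) [TopologicalSpace X] [TopologicalSpace Y] (x0 : X) (y0 : Y) :
    Type _ := Quotient (wedgeSetoid X Y x0 y0)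

/-- The 2-sphere. -/
abbrev Sphere2 : Type _ := Metric.sphere (0 : EuclideanSpace ℝ (Fin 3)) 1

/-- The 3-torus. -/
abbrev Torus3 : Type _ := Circle × Circle × Circle

end CS

namespace CS

/-- The group of the connected sum `T(3,5) # T(-2,7) # T(-2,7)`: the iterated pushout
identifying all three meridians to a common element. -/
abbrev SumKnotGroup2 : Type _ :=
  Amalg (zpowersHom (TK 3 5) mu35) (zpowersHom Pi1Z muZ)

/-- The normal closure of `m λ_X λ⁽¹⁾ λ⁽²⁾`, the relation of `+1` surgery. -/
def surgeryRel2 : Subgroup SumKnotGroup2 :=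
  Subgroup.normalClosure
    {Amalg.inl (zpowersHom (TK 3 5) mu35) (zpowersHom Pi1Z muZ) mu35 *
      Amalg.inl (zpowersHom (TK 3 5) mu35) (zpowersHom Pi1Z muZ) lam35 *
      Amalg.inr (zpowersHom (TK 3 5) mu35) (zpowersHom Pi1Z muZ)
        (Amalg.inl (zpowersHom (TK (-2) 7) muN27) (zpowersHom (TK (-2) 7) muN27) lamN27) *
      Amalg.inr (zpowersHom (TK 3 5) mu35) (zpowersHom Pi1Z muZ)
        (Amalg.inr (zpowersHom (TK (-2) 7) muN27) (zpowersHom (TK (-2) 7) muN27) lamN27)}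

instance : surgeryRel2.Normal := Subgroup.normalClosure_normal

end CS

namespace CS

section Amalg

variable {A G H K : Type*} [Group A] [Group G] [Group H] [Group K] {φ : A →* G} {ψ : A →* H}

def Amalg.lift (f : G →* K) (g : H →* K) (hfg : ∀ a, f (φ a) = g (ψ a)) : Amalg φ ψ →* K :=
  QuotientGroup.lift _ (Monoid.Coprod.lift f g) <| Subgroup.normalClosure_le_normal <| by
    rintro _ ⟨a, rfl⟩
    simp [hfg a]

@[simp]
theorem Amalg.lift_inl (f : G →* K) (g : H →* K) (hfg : ∀ a, f (φ a) = g (ψ a)) (x : G) :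
    Amalg.lift f g hfg (Amalg.inl φ ψ x) = f x :=
  rfl

@[simp]
theorem Amalg.lift_inr (f : G →* K) (g : H →* K) (hfg : ∀ a, f (φ a) = g (ψ a)) (y : H) :
    Amalg.lift f g hfg (Amalg.inr φ ψ y) = g y :=
  rfl

theorem Amalg.hom_ext {f g : Amalg φ ψ →* K}
    (hl : f.comp (Amalg.inl φ ψ) = g.comp (Amalg.inl φ ψ))
    (hr : f.comp (Amalg.inr φ ψ) = g.comp (Amalg.inr φ ψ)) : f = g :=
  QuotientGroup.monoidHom_ext _ (Monoid.Coprod.hom_ext hl hr)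

end Amalg

variable {G H : Type*} [Group G] [Group H]

theorem zsqHom_apply (u v : G) (huv : Commute u v) (z : Z2) :
    zsqHom u v huv z = u ^ (Multiplicative.toAdd z).1 * v ^ (Multiplicative.toAdd z).2 :=
  rfl

theorem Amalg.inl_zpowersHom_eq_inr (u : G) (u' : H) :
    Amalg.inl (zpowersHom G u) (zpowersHom H u') u =
      Amalg.inr (zpowersHom G u) (zpowersHom H u') u' := by
  simpa using amalg_comm (zpowersHom G u) (zpowersHom H u') (Multiplicative.ofAdd 1)

theorem Amalg.inl_zsqHom_eq_inr {u v : G} {u' v' : H} (huv : Commute u v)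
    (huv' : Commute u' v') :
    Amalg.inl (zsqHom u v huv) (zsqHom u' v' huv') u =
        Amalg.inr (zsqHom u v huv) (zsqHom u' v' huv') u' ∧
      Amalg.inl (zsqHom u v huv) (zsqHom u' v' huv') v =
        Amalg.inr (zsqHom u v huv) (zsqHom u' v' huv') v' := by
  constructor
  · simpa [zsqHom_apply] using
      amalg_comm (zsqHom u v huv) (zsqHom u' v' huv') (Multiplicative.ofAdd (1, 0))
  · simpa [zsqHom_apply] using
      amalg_comm (zsqHom u v huv) (zsqHom u' v' huv') (Multiplicative.ofAdd (0, 1))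

def amalgZsqHomEquiv {u v : G} {u' v' : H} (huv : Commute u v) (huv' : Commute u' v') :
    Amalg (zsqHom u v huv) (zsqHom u' v' huv') ≃*
      Amalg (zpowersHom G u) (zpowersHom H u') ⧸
        Subgroup.normalClosure
          {Amalg.inl (zpowersHom G u) (zpowersHom H u') v *
            (Amalg.inr (zpowersHom G u) (zpowersHom H u') v')⁻¹} := by
  set r := Amalg.inl (zpowersHom G u) (zpowersHom H u') v *
    (Amalg.inr (zpowersHom G u) (zpowersHom H u') v')⁻¹
  set i := (QuotientGroup.mk' (Subgroup.normalClosure {r})).comp (Amalg.inl _ _)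
  set j := (QuotientGroup.mk' (Subgroup.normalClosure {r})).comp (Amalg.inr _ _)
  have hu : i u = j u' := congrArg _ (Amalg.inl_zpowersHom_eq_inr u u')
  have hv : i v = j v' :=
    mul_inv_eq_one.mp ((QuotientGroup.eq_one_iff r).mpr (Subgroup.subset_normalClosure rfl))
  obtain ⟨hu', hv'⟩ := Amalg.inl_zsqHom_eq_inr huv huv'
  let forward : Amalg (zsqHom u v huv) (zsqHom u' v' huv') →* _ :=
    Amalg.lift i j fun z => by simp [zsqHom_apply, hu, hv]
  let backward := QuotientGroup.lift (Subgroup.normalClosure {r})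
    (Amalg.lift (Amalg.inl (zsqHom u v huv) (zsqHom u' v' huv')) (Amalg.inr _ _)
      fun n => by simp only [zpowersHom_apply, map_zpow, hu'])
    (Subgroup.normalClosure_le_normal <| Set.singleton_subset_iff.mpr <| by
      simp [r, hv'])
  exact forward.toMulEquiv backward
    (Amalg.hom_ext rfl rfl) (QuotientGroup.monoidHom_ext _ (Amalg.hom_ext rfl rfl))

theorem Amalg.inl_mul_inl_mul_inr_eq {μ ℓ : G} {μ' ℓ' : H} (h : Commute μ ℓ) :
    Amalg.inl (zpowersHom G μ) (zpowersHom H μ') μ * Amalg.inl _ _ ℓ * Amalg.inr _ _ ℓ' =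
      Amalg.inl _ _ ℓ * (Amalg.inr _ _ (μ' * ℓ')⁻¹)⁻¹ := by
  rw [map_inv, inv_inv, map_mul, ← Amalg.inl_zpowersHom_eq_inr, ← mul_assoc, ← map_mul,
    ← map_mul, h.eq]

end CS

open CS in
/-- `π₁(Σ₂)` is the fundamental group of `+1` surgery on
`T(3,5) # T(-2,7) # T(-2,7)`. -/
theorem Pi1Sigma2_is_surgery : Nonempty (Pi1Sigma2 ≃* (SumKnotGroup2 ⧸ surgeryRel2)) := by
  have h35 : Commute mu35 lam35 := tk_mu_lam_comm 3 5 2 (-3)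
  have hrel : surgeryRel2 = Subgroup.normalClosure
      {Amalg.inl _ _ lam35 * (Amalg.inr (zpowersHom (TK 3 5) mu35) _ (muZ * lamZ)⁻¹)⁻¹} := by
    rw [← Amalg.inl_mul_inl_mul_inr_eq h35]
    simp only [surgeryRel2, lamZ, map_mul, mul_assoc]
  exact ⟨(amalgZsqHomEquiv h35 (mu_mulLam_comm muZ_lamZ_comm)).trans
    (QuotientGroup.quotientMulEquivOfEq hrel.symm)⟩
end
end

section
/- Let G₁ and G₂ be groups and let ρ₁: G₁ → SU(2) and ρ₂: G₂ → SU(2) be irreducible representations. Then the subspace of χ(G₁ * G₂) (the free product) consisting of classes [ρ] whose restriction to G₁ is conjugate to ρ₁ and whose restriction to G₂ is conjugate to ρ₂ is homeomorphic to the quotient group SU(2)/{I, −I} with its quotient topology (equivalently, to real projective 3-space). -/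
open Matrix

noncomputable section

namespace CS

lemma negOne_mem : (-1 : Matrix (Fin 2) (Fin 2) ℂ) ∈ Matrix.specialUnitaryGroup (Fin 2) ℂ := by
  refine Submonoid.mem_inf.mpr ⟨⟨?_, ?_⟩, ?_⟩
  · simp
  · simp
  · have : (-1 : Matrix (Fin 2) (Fin 2) ℂ).det = 1 := by
      rw [show (-1 : Matrix (Fin 2) (Fin 2) ℂ) = (-1 : ℂ) • (1 : Matrix (Fin 2) (Fin 2) ℂ) by simp]
      rw [Matrix.det_smul, Matrix.det_one]
      norm_num
    simpa only [MonoidHom.mem_mker, ← Matrix.coe_detMonoidHom] using this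

/-- The element `-I` of `SU(2)`. -/
def negOneSU : SU2 := ⟨-1, negOne_mem⟩

/-- The central subgroup `{I, -I}` of `SU(2)`. -/
def pmOne : Subgroup SU2 := Subgroup.zpowers negOneSU

lemma negOne_central (g : SU2) : Commute negOneSU g := by
  apply Subtype.ext
  show (-1 : Matrix (Fin 2) (Fin 2) ℂ) * (g : Matrix (Fin 2) (Fin 2) ℂ)
      = (g : Matrix (Fin 2) (Fin 2) ℂ) * (-1)
  rw [neg_one_mul, mul_neg_one]

instance : pmOne.Normal := by
  constructor
  intro n hn g
  obtain ⟨k, rfl⟩ := Subgroup.mem_zpowers_iff.mp hn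
  have hc : Commute (negOneSU ^ k) g := (negOne_central g).zpow_left k
  have : g * negOneSU ^ k * g⁻¹ = negOneSU ^ k := by
    rw [← hc.eq, mul_assoc, mul_inv_cancel, mul_one]
  rw [this]
  exact Subgroup.mem_zpowers_iff.mpr ⟨k, rfl⟩

end CS

/-!
Every class in the set is represented by the gluing `ρ₁ * (u ρ₂ u⁻¹)` for some `u ∈ SU(2)`, which
gives a continuous surjection from `SU(2)`. A conjugator between two gluings centralizes the image
of `ρ₁`, so by Schur's lemma it is `±I`, hence central; the two gluing parameters then differ by an
element centralizing the image of `ρ₂`, again `±I`. The fibres are therefore the cosets of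
`{I, -I}`, and the map is a quotient map because it is closed: `SU(2)` is compact, and a closed
conjugation-invariant set of representations has closed image in the character variety.
-/

theorem conj_eq_conj_iff_commute {G : Type*} [Group G] {u v x : G} :
    v * x * v⁻¹ = u * x * u⁻¹ ↔ Commute (u⁻¹ * v) x := by
  constructor
  · intro h
    calc u⁻¹ * v * x = u⁻¹ * (v * x * v⁻¹) * v := by group
      _ = x * (u⁻¹ * v) := by rw [h]; group
  · intro h
    calc v * x * v⁻¹ = u * (u⁻¹ * v * x) * v⁻¹ := by group
      _ = u * x * u⁻¹ := by rw [h.eq]; group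

theorem Topology.IsQuotientMap.nonempty_quotient_homeomorph {X Y : Type*} [TopologicalSpace X]
    [TopologicalSpace Y] {f : X → Y} (hf : IsQuotientMap f) {s : Setoid X}
    (hs : ∀ a b, s a b ↔ f a = f b) : Nonempty (Quotient s ≃ₜ Y) := by
  obtain rfl : s = Setoid.ker f := Setoid.ext hs
  exact ⟨IsQuotientMap.homeomorph (f := ⟨f, hf.continuous⟩) hf⟩

namespace Matrix

variable {K : Type*}

theorem commute_fin_two_iff [CommRing K] {A B : Matrix (Fin 2) (Fin 2) K} :
    Commute A B ↔ A 0 1 * B 1 0 = B 0 1 * A 1 0 ∧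
      A 0 1 * (B 0 0 - B 1 1) = B 0 1 * (A 0 0 - A 1 1) ∧
      A 1 0 * (B 0 0 - B 1 1) = B 1 0 * (A 0 0 - A 1 1) := by
  simp only [Commute, SemiconjBy, ← Matrix.ext_iff, Fin.forall_fin_two, mul_apply,
    Fin.sum_univ_two]
  constructor
  · rintro ⟨⟨h00, h01⟩, h10, -⟩
    exact ⟨by linear_combination h00, by linear_combination -h01, by linear_combination h10⟩
  · rintro ⟨e, e0, e1⟩
    exact ⟨⟨by linear_combination e, by linear_combination -e0⟩,
      by linear_combination e1, by linear_combination -e⟩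

/-- By `commute_fin_two_iff`, `Commute A B` says that `(B 0 1, B 1 0, B 0 0 - B 1 1)` is parallel
to `(A 0 1, A 1 0, A 0 0 - A 1 1)`, a nonzero vector when `A` is not scalar. -/
theorem commute_of_commute_of_commute_fin_two [Field K] {A B C : Matrix (Fin 2) (Fin 2) K}
    (hA : A ∉ Set.range (scalar (Fin 2))) (hB : Commute A B) (hC : Commute A C) :
    Commute B C := by
  have hA' : A 0 1 ≠ 0 ∨ A 1 0 ≠ 0 ∨ A 0 0 - A 1 1 ≠ 0 := by
    contrapose! hA
    refine ⟨A 0 0, ?_⟩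
    ext i j
    fin_cases i <;> fin_cases j <;> simp [hA.1, hA.2.1, sub_eq_zero.mp hA.2.2]
  rw [commute_fin_two_iff] at *
  obtain ⟨b, b0, b1⟩ := hB
  obtain ⟨c, c0, c1⟩ := hC
  rcases hA' with h | h | h <;> refine ⟨?_, ?_, ?_⟩ <;> apply mul_left_cancel₀ h <;> grind

end Matrix

namespace CS

local notation "M2" => Matrix (Fin 2) (Fin 2) ℂ

theorem eq_one_or_eq_negOneSU_of_coe_eq_scalar {A : SU2} {c : ℂ}
    (h : (A : M2) = Matrix.scalar (Fin 2) c) : A = 1 ∨ A = negOneSU := by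
  have hdet : c ^ 2 = 1 := by
    simpa [h] using (Matrix.mem_specialUnitaryGroup_iff.mp A.2).2
  rcases sq_eq_one_iff.mp hdet with rfl | rfl
  · exact Or.inl (Subtype.ext (h.trans (map_one _)))
  · exact Or.inr (Subtype.ext (h.trans (by rw [map_neg, map_one]; rfl)))

theorem eq_one_or_eq_negOneSU_of_commute {A B C : SU2} (hB : Commute A B) (hC : Commute A C)
    (hBC : ¬ Commute B C) : A = 1 ∨ A = negOneSU := by
  by_contra hA
  have hA' : (A : M2) ∉ Set.range (Matrix.scalar (Fin 2)) := fun ⟨c, hc⟩ =>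
    hA (eq_one_or_eq_negOneSU_of_coe_eq_scalar hc.symm)
  exact hBC (Subtype.ext (Matrix.commute_of_commute_of_commute_fin_two hA'
    (congrArg Subtype.val hB) (congrArg Subtype.val hC)))

theorem mem_pmOne_of_forall_commute {G : Type*} [Group G] {ρ : G →* SU2} (hρ : IsIrrep ρ)
    {w : SU2} (hw : ∀ g, Commute w (ρ g)) : w ∈ pmOne := by
  obtain ⟨g, g', hgg'⟩ : ∃ g g', ¬ Commute (ρ g) (ρ g') := by
    simpa [IsIrrep, IsAbelianRep] using hρ
  rcases eq_one_or_eq_negOneSU_of_commute (hw g) (hw g') hgg' with rfl | rfl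
  · exact pmOne.one_mem
  · exact Subgroup.mem_zpowers _

theorem commute_of_mem_pmOne {w : SU2} (hw : w ∈ pmOne) (x : SU2) : Commute w x := by
  obtain ⟨k, rfl⟩ := Subgroup.mem_zpowers_iff.mp hw
  exact (negOne_central x).zpow_left k

/-- The scoped L2 operator norm induces the usual topology on matrices, and unitaries have
norm `1` in it. -/
instance : CompactSpace SU2 := by
  open scoped Matrix.Norms.L2Operator in
  refine isCompact_iff_compactSpace.mp
    ((isCompact_closedBall (0 : M2) 1).of_isClosed_subset ?_ fun A hA => ?_)
  · exact isClosed_unitary.inter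
      (isClosed_eq (continuous_id.matrix_det (n := Fin 2)) continuous_const)
  · exact mem_closedBall_zero_iff.mpr (CStarRing.norm_of_mem_unitary hA.1).le

instance : ContinuousInv SU2 :=
  ⟨continuous_induced_rng.2 (continuous_star.comp continuous_subtype_val)⟩

section Conjugation

variable {G : Type*} [Group G]

def conjRep (u : SU2) (ρ : G →* SU2) : G →* SU2 :=
  (MulAut.conj u).toMonoidHom.comp ρ

@[simp]
theorem conjRep_apply (u : SU2) (ρ : G →* SU2) (g : G) : conjRep u ρ g = u * ρ g * u⁻¹ :=
  rfl

theorem conjRep_mul (u v : SU2) (ρ : G →* SU2) :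
    conjRep (u * v) ρ = conjRep u (conjRep v ρ) :=
  MonoidHom.ext fun g => by simp only [conjRep_apply]; group

theorem charCl_eq_charCl_iff {ρ σ : G →* SU2} :
    charCl ρ = charCl σ ↔ ∃ u, σ = conjRep u ρ := by
  simp only [Quotient.eq, DFunLike.ext_iff, conjRep_apply]
  rfl

@[simp]
theorem charCl_conjRep (u : SU2) (ρ : G →* SU2) : charCl (conjRep u ρ) = charCl ρ :=
  (charCl_eq_charCl_iff.mpr ⟨u, rfl⟩).symm

instance : T2Space (G →* SU2) :=
  .of_injective_continuous DFunLike.coe_injective continuous_induced_dom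

theorem continuous_conjRep : Continuous fun p : SU2 × (G →* SU2) => conjRep p.1 p.2 := by
  refine continuous_induced_rng.2 (continuous_pi fun g => ?_)
  have hρ : Continuous fun p : SU2 × (G →* SU2) => p.2 g :=
    (continuous_apply g).comp (continuous_induced_dom.comp continuous_snd)
  exact (continuous_fst.mul hρ).mul continuous_fst.inv

theorem isClosed_image_charCl {K : Set (G →* SU2)} (hK : IsClosed K)
    (hconj : ∀ u, ∀ ρ ∈ K, conjRep u ρ ∈ K) : IsClosed (charCl '' K) := by
  refine isQuotientMap_quotient_mk'.isClosed_preimage.mp ?_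
  convert hK using 1
  ext σ
  constructor
  · rintro ⟨ρ, hρ, hρσ⟩
    obtain ⟨u, rfl⟩ := charCl_eq_charCl_iff.mp hρσ
    exact hconj u ρ hρ
  · exact fun hσ => ⟨σ, hσ, rfl⟩

end Conjugation

section Gluing

variable {G₁ G₂ : Type*} [Group G₁] [Group G₂] (ρ1 : G₁ →* SU2) (ρ2 : G₂ →* SU2)

def glue (u : SU2) : Monoid.Coprod G₁ G₂ →* SU2 :=
  Monoid.Coprod.lift ρ1 (conjRep u ρ2)

@[simp]
theorem glue_inl (u : SU2) (g : G₁) : glue ρ1 ρ2 u (Monoid.Coprod.inl g) = ρ1 g :=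
  Monoid.Coprod.lift_apply_inl _ _ _

@[simp]
theorem glue_inr (u : SU2) (g : G₂) : glue ρ1 ρ2 u (Monoid.Coprod.inr g) = u * ρ2 g * u⁻¹ :=
  Monoid.Coprod.lift_apply_inr _ _ _

theorem continuous_glue : Continuous (glue ρ1 ρ2) := by
  refine continuous_induced_rng.2 (continuous_pi fun m => ?_)
  change Continuous fun u => glue ρ1 ρ2 u m
  induction m using Monoid.Coprod.induction_on with
  | inl g => simp only [glue_inl]; fun_prop
  | inr g => simp only [glue_inr]; fun_prop
  | mul x y hx hy => simp only [map_mul]; exact hx.mul hy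

def gluingSet : Set (CharVar (Monoid.Coprod G₁ G₂)) :=
  {c | ∃ ρ : Monoid.Coprod G₁ G₂ →* SU2, c = charCl ρ ∧
    (∃ u : SU2, ∀ g : G₁, ρ (Monoid.Coprod.inl g) = u * ρ1 g * u⁻¹) ∧
    (∃ u : SU2, ∀ g : G₂, ρ (Monoid.Coprod.inr g) = u * ρ2 g * u⁻¹)}

def gluingMap (u : SU2) : gluingSet ρ1 ρ2 :=
  ⟨charCl (glue ρ1 ρ2 u), glue ρ1 ρ2 u, rfl, ⟨1, by simp⟩, ⟨u, glue_inr ρ1 ρ2 u⟩⟩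

theorem continuous_gluingMap : Continuous (gluingMap ρ1 ρ2) :=
  (continuous_quot_mk.comp (continuous_glue ρ1 ρ2)).subtype_mk _

theorem surjective_gluingMap : Function.Surjective (gluingMap ρ1 ρ2) := by
  rintro ⟨_, ρ, rfl, ⟨u, hu⟩, ⟨v, hv⟩⟩
  refine ⟨u⁻¹ * v, Subtype.ext (charCl_eq_charCl_iff.mpr ⟨u, ?_⟩)⟩
  ext g
  · simp [hu]
  · simp only [MonoidHom.comp_apply, conjRep_apply, glue_inr, hv]
    group

theorem gluingMap_eq_gluingMap_iff (h1 : IsIrrep ρ1) (h2 : IsIrrep ρ2) {u v : SU2} :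
    gluingMap ρ1 ρ2 u = gluingMap ρ1 ρ2 v ↔ u⁻¹ * v ∈ pmOne := by
  rw [Subtype.ext_iff]
  change charCl (glue ρ1 ρ2 u) = charCl (glue ρ1 ρ2 v) ↔ _
  rw [charCl_eq_charCl_iff]
  constructor
  · rintro ⟨w, hw⟩
    have hw1 : w ∈ pmOne := mem_pmOne_of_forall_commute h1 fun g => by
      have := DFunLike.congr_fun hw (Monoid.Coprod.inl g)
      simp only [glue_inl, conjRep_apply] at this
      exact (eq_mul_inv_iff_mul_eq.mp this).symm
    refine mem_pmOne_of_forall_commute h2 fun g => ?_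
    have := DFunLike.congr_fun hw (Monoid.Coprod.inr g)
    simp only [glue_inr, conjRep_apply] at this
    rw [← conj_eq_conj_iff_commute, this, (commute_of_mem_pmOne hw1 _).eq, mul_inv_cancel_right]
  · intro huv
    refine ⟨1, Monoid.Coprod.hom_ext (MonoidHom.ext fun g => by simp) (MonoidHom.ext fun g => ?_)⟩
    simp only [MonoidHom.comp_apply, conjRep_apply, glue_inr, one_mul, inv_one, mul_one]
    exact conj_eq_conj_iff_commute.mpr (commute_of_mem_pmOne huv _)

theorem isClosedMap_gluingMap : IsClosedMap (gluingMap ρ1 ρ2) := by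
  intro C hC
  set K := (fun p : SU2 × SU2 => conjRep p.1 (glue ρ1 ρ2 p.2)) '' (Set.univ ×ˢ C)
  have hK : IsClosed K :=
    ((isCompact_univ.prod hC.isCompact).image (continuous_conjRep.comp
      (continuous_fst.prodMk ((continuous_glue ρ1 ρ2).comp continuous_snd)))).isClosed
  have hKconj : ∀ u, ∀ ρ ∈ K, conjRep u ρ ∈ K := by
    rintro u _ ⟨⟨w, v⟩, ⟨-, hv⟩, rfl⟩
    exact ⟨(u * w, v), ⟨trivial, hv⟩, conjRep_mul u w _⟩
  have himage : gluingMap ρ1 ρ2 '' C = Subtype.val ⁻¹' (charCl '' K) := by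
    ext ⟨c, -⟩
    constructor
    · rintro ⟨u, hu, huc⟩
      exact ⟨_, ⟨(1, u), ⟨trivial, hu⟩, rfl⟩,
        (charCl_conjRep _ _).trans (congrArg Subtype.val huc)⟩
    · rintro ⟨_, ⟨⟨w, u⟩, ⟨-, hu⟩, rfl⟩, hwu⟩
      exact ⟨u, hu, Subtype.ext ((charCl_conjRep _ _).symm.trans hwu)⟩
  rw [himage]
  exact (isClosed_image_charCl hK hKconj).preimage continuous_subtype_val

theorem isQuotientMap_gluingMap : Topology.IsQuotientMap (gluingMap ρ1 ρ2) :=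
  (isClosedMap_gluingMap ρ1 ρ2).isQuotientMap (continuous_gluingMap ρ1 ρ2)
    (surjective_gluingMap ρ1 ρ2)

end Gluing

end CS

open CS in
/-- For irreducible `ρ₁ : G₁ → SU(2)` and `ρ₂ : G₂ → SU(2)`, the set of classes
in `χ(G₁ * G₂)` restricting (up to conjugation) to `ρ₁` and `ρ₂` is homeomorphic to
`SU(2)/{I,-I}` with its quotient topology. -/
theorem gluing_parameters_free_product (G₁ G₂ : Type) [Group G₁] [Group G₂]
    (ρ1 : G₁ →* SU2) (ρ2 : G₂ →* SU2) (h1 : IsIrrep ρ1) (h2 : IsIrrep ρ2) :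
    Nonempty
      (↥{c : CharVar (Monoid.Coprod G₁ G₂) | ∃ ρ : Monoid.Coprod G₁ G₂ →* SU2, c = charCl ρ ∧
          (∃ u : SU2, ∀ g : G₁, ρ (Monoid.Coprod.inl g) = u * ρ1 g * u⁻¹) ∧
          (∃ u : SU2, ∀ g : G₂, ρ (Monoid.Coprod.inr g) = u * ρ2 g * u⁻¹)}
        ≃ₜ (SU2 ⧸ pmOne)) := by
  obtain ⟨e⟩ := (isQuotientMap_gluingMap ρ1 ρ2).nonempty_quotient_homeomorph
    (s := QuotientGroup.leftRel pmOne) fun u v => by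
      rw [QuotientGroup.leftRel_apply, gluingMap_eq_gluingMap_iff ρ1 ρ2 h1 h2]
  exact ⟨e.symm⟩
end
end
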